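/- arXiv:2301.00545 — 3 statements merged into one kernel-verified Lean document; each statement's English description precedes it below -/
import Mathlib

section
/- For i.i.d. Bernoulli(ρ) random variables B_1,...,B_n, the process M_j := (1+j)/(1+S_j), where S_j = B_1 + ... + B_j, is a super-martingale with respect to the reverse filtration F_j = σ(S_j, B_{j+1}, ..., B_n); that is, E[M_j | F_{j+1}] ≤ M_{j+1} for all 1 ≤ j ≤ n-1. -/
/-!
Conditionally on `F (j+1)`, the variables `B 1, …, B (j+1)` are exchangeable: swapping two of
them leaves the law of the i.i.d. sequence unchanged and fixes `S (j+1)` and `B (j+2), …, B n`.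
Hence `E[B (j+1) | F (j+1)] = S (j+1) / (j+1)`. As `B (j+1) ∈ {0, 1}`, the variable
`M j = (1+j) / (1 + S (j+1) - B (j+1))` is affine in `B (j+1)` with `F (j+1)`-measurable
coefficients; substituting the conditional expectation gives exactly `M (j+1)` where
`S (j+1) > 0`, and `1 + j < 2 + j = M (j+1)` where `S (j+1) = 0`.
-/

open MeasureTheory ProbabilityTheory

section

variable {Ω ι : Type*} {m mΩ : MeasurableSpace Ω} {μ : Measure Ω}

theorem ProbabilityTheory.iIndepFun.map_comp_perm_eq {β : Type*} [MeasurableSpace β]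
    {X : ι → Ω → β} (hX : ∀ i, Measurable (X i)) (hindep : iIndepFun X μ)
    (hident : ∀ i k, μ.map (X i) = μ.map (X k)) (σ : Equiv.Perm ι) :
    μ.map (fun ω i ↦ X (σ i) ω) = μ.map (fun ω i ↦ X i ω) := by
  rw [(hindep.precomp σ.injective).map_fun_eq_infinitePi_map (fun i ↦ hX (σ i)),
    hindep.map_fun_eq_infinitePi_map hX]
  exact congrArg _ (funext fun i ↦ hident (σ i) i)

theorem condExp_comp_eq_of_map_comp_eq [IsFiniteMeasure μ] {E α γ : Type*}
    [NormedAddCommGroup E] [NormedSpace ℝ E] [CompleteSpace E] [MeasurableSpace α]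
    [MeasurableSpace γ] {X : Ω → α} (hX : Measurable X) {τ : α → α} (hτ : Measurable τ)
    (hlaw : μ.map (τ ∘ X) = μ.map X) {G : α → γ} (hG : Measurable G) (hGτ : G ∘ τ = G)
    (hm : m ≤ MeasurableSpace.comap (G ∘ X) inferInstance) {f : α → E}
    (hf : StronglyMeasurable f) (hfi : Integrable (f ∘ X) μ) :
    μ[f ∘ τ ∘ X | m] =ᵐ[μ] μ[f ∘ X | m] := by
  have hm₀ : m ≤ mΩ := hm.trans (hG.comp hX).comap_le
  have hτX : Measurable (τ ∘ X) := hτ.comp hX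
  have hfi' : Integrable (f ∘ τ ∘ X) μ := by
    rwa [← integrable_map_measure hf.aestronglyMeasurable hτX.aemeasurable,
      hlaw, integrable_map_measure hf.aestronglyMeasurable hX.aemeasurable]
  refine (ae_eq_condExp_of_forall_setIntegral_eq hm₀ hfi'
    (fun s _ _ ↦ integrable_condExp.integrableOn) (fun s hs _ ↦ ?_)
    stronglyMeasurable_condExp.aestronglyMeasurable).symm
  obtain ⟨t, ht, rfl⟩ := hm s hs
  have hpre : (G ∘ X) ⁻¹' t = (τ ∘ X) ⁻¹' (G ⁻¹' t) := by
    rw [← Set.preimage_comp, ← Function.comp_assoc, hGτ]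
  calc ∫ ω in (G ∘ X) ⁻¹' t, μ[f ∘ X | m] ω ∂μ
      = ∫ a in G ⁻¹' t, f a ∂(μ.map X) := by
        rw [setIntegral_condExp hm₀ hfi hs, setIntegral_map (hG ht) hf.aestronglyMeasurable
          hX.aemeasurable]
        rfl
    _ = ∫ a in G ⁻¹' t, f a ∂(μ.map (τ ∘ X)) := by rw [hlaw]
    _ = ∫ ω in (G ∘ X) ⁻¹' t, (f ∘ τ ∘ X) ω ∂μ := by
        rw [hpre, setIntegral_map (hG ht) hf.aestronglyMeasurable hτX.aemeasurable]
        rfl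

theorem ProbabilityTheory.iIndepFun.condExp_eq_sum_div_card [IsProbabilityMeasure μ]
    {X : ι → Ω → ℝ} (hX : ∀ i, Measurable (X i)) (hindep : iIndepFun X μ)
    (hident : ∀ i k, μ.map (X i) = μ.map (X k)) (hint : ∀ i, Integrable (X i) μ) (t : Finset ι)
    (hm : m ≤ MeasurableSpace.comap
      (fun ω ↦ (∑ i ∈ t, X i ω, fun i : {i // i ∉ t} ↦ X i ω)) inferInstance)
    (hsum : Measurable[m] fun ω ↦ ∑ i ∈ t, X i ω) {k : ι} (hk : k ∈ t) :
    μ[X k | m] =ᵐ[μ] fun ω ↦ (∑ i ∈ t, X i ω) / t.card := by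
  classical
  set G : (ι → ℝ) → ℝ × ({i // i ∉ t} → ℝ) := fun x ↦ (∑ i ∈ t, x i, fun i ↦ x i)
  have hG : Measurable G :=
    (Finset.measurable_sum _ fun i _ ↦ measurable_pi_apply i).prodMk
      (measurable_pi_lambda _ fun i ↦ measurable_pi_apply _)
  have hXvec : Measurable fun ω i ↦ X i ω := measurable_pi_lambda _ hX
  have hm₀ : m ≤ mΩ := hm.trans (hG.comp hXvec).comap_le
  have hexch : ∀ i ∈ t, μ[X i | m] =ᵐ[μ] μ[X k | m] := by
    intro i hi
    have hGτ : G ∘ (fun x ↦ x ∘ Equiv.swap i k) = G := by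
      funext x
      refine Prod.ext (Equiv.Perm.sum_comp _ t x fun a ha ↦ ?_) (funext fun a ↦ ?_)
      · rcases (Equiv.swap_apply_ne_self_iff.1 ha).2 with rfl | rfl <;> assumption
      · exact congrArg x (Equiv.swap_apply_of_ne_of_ne (ne_of_mem_of_not_mem hi a.2).symm
          (ne_of_mem_of_not_mem hk a.2).symm)
    have := condExp_comp_eq_of_map_comp_eq hXvec
      (measurable_pi_lambda _ fun a ↦ measurable_pi_apply _)
      (hindep.map_comp_perm_eq hX hident (Equiv.swap i k)) hG hGτ hm
      (f := fun x ↦ x k) (measurable_pi_apply k).stronglyMeasurable (hint k)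
    simpa [Function.comp_def] using this
  have hsum_ae : (fun ω ↦ ∑ i ∈ t, X i ω) =ᵐ[μ] fun ω ↦ t.card * μ[X k | m] ω := by
    have hself : μ[∑ i ∈ t, X i | m] = ∑ i ∈ t, X i := by
      rw [Finset.sum_fn]
      exact condExp_of_stronglyMeasurable hm₀ hsum.stronglyMeasurable
        (integrable_finsetSum _ fun i _ ↦ hint i)
    filter_upwards [condExp_finsetSum (fun i _ ↦ hint i) m,
      (Filter.eventually_all_finset t).2 hexch] with ω hω hexch
    rw [hself, Finset.sum_apply, Finset.sum_apply, Finset.sum_congr rfl hexch] at hω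
    rw [hω, Finset.sum_const, nsmul_eq_mul]
  have hcard : (t.card : ℝ) ≠ 0 := Nat.cast_ne_zero.2 (Finset.card_ne_zero_of_mem hk)
  filter_upwards [hsum_ae] with ω hω
  rw [hω, mul_div_cancel_left₀ _ hcard]

theorem integrable_of_eq_zero_or_eq_one [IsFiniteMeasure μ] {f : Ω → ℝ} (hf : Measurable f)
    (h01 : ∀ ω, f ω = 0 ∨ f ω = 1) : Integrable f μ :=
  .of_bound hf.aestronglyMeasurable 1 (ae_of_all _ fun ω ↦ by rcases h01 ω with h | h <;> simp [h])

open Classical in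
theorem preimage_eq_of_eq_zero_or_eq_one {f : Ω → ℝ} (hf : ∀ ω, f ω = 0 ∨ f ω = 1) (s : Set ℝ) :
    f ⁻¹' s = if (0 : ℝ) ∈ s then (if (1 : ℝ) ∈ s then Set.univ else {ω | f ω = 1}ᶜ)
      else (if (1 : ℝ) ∈ s then {ω | f ω = 1} else ∅) := by
  ext ω
  rcases hf ω with h | h <;> split_ifs <;> simp_all

theorem map_eq_map_of_eq_zero_or_eq_one [IsFiniteMeasure μ] {f g : Ω → ℝ} (hf : Measurable f)
    (hg : Measurable g) (hf01 : ∀ ω, f ω = 0 ∨ f ω = 1) (hg01 : ∀ ω, g ω = 0 ∨ g ω = 1)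
    (h : μ {ω | f ω = 1} = μ {ω | g ω = 1}) : μ.map f = μ.map g := by
  have hf1 : MeasurableSet {ω | f ω = 1} := hf (measurableSet_singleton 1)
  have hg1 : MeasurableSet {ω | g ω = 1} := hg (measurableSet_singleton 1)
  ext s hs
  rw [Measure.map_apply hf hs, Measure.map_apply hg hs, preimage_eq_of_eq_zero_or_eq_one hf01,
    preimage_eq_of_eq_zero_or_eq_one hg01]
  split_ifs
  · rfl
  · rw [measure_compl hf1 (measure_ne_top μ _), measure_compl hg1 (measure_ne_top μ _), h]
  · exact h
  · rfl

theorem comap_sum_sup_iSup_comap_le {ι : Type*} {X : ι → Ω → ℝ} (t s : Finset ι)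
    (hst : Disjoint s t) :
    MeasurableSpace.comap (fun ω ↦ ∑ i ∈ t, X i ω) inferInstance ⊔
        ⨆ i ∈ s, MeasurableSpace.comap (X i) inferInstance ≤
      MeasurableSpace.comap (fun ω ↦ (∑ i ∈ t, X i ω, fun i : {i // i ∉ t} ↦ X i ω))
        inferInstance := by
  let G : Ω → ℝ × ({i // i ∉ t} → ℝ) := fun ω ↦ (∑ i ∈ t, X i ω, fun i ↦ X i ω)
  refine sup_le (measurable_fst.comp (comap_measurable G)).comap_le (iSup₂_le fun i hi ↦ ?_)
  exact (((measurable_pi_apply (⟨i, Finset.disjoint_left.1 hst hi⟩ : {i // i ∉ t})).comp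
    measurable_snd).comp (comap_measurable G)).comap_le

theorem condExp_div_one_add_sub_le [IsFiniteMeasure μ] (hm : m ≤ mΩ) {X Y : Ω → ℝ}
    (hX : Measurable X) (hX01 : ∀ ω, X ω = 0 ∨ X ω = 1) (hY : StronglyMeasurable[m] Y)
    (hXY : ∀ ω, X ω ≤ Y ω) {c : ℝ} (hc : 0 ≤ c) (hcond : μ[X | m] =ᵐ[μ] fun ω ↦ Y ω / (1 + c)) :
    μ[fun ω ↦ (1 + c) / (1 + (Y ω - X ω)) | m] ≤ᵐ[μ] fun ω ↦ (2 + c) / (1 + Y ω) := by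
  have hY0 : ∀ ω, 0 ≤ Y ω := fun ω ↦ by rcases hX01 ω with h | h <;> linarith [hXY ω]
  set φ : Ω → ℝ := fun ω ↦ (1 + c) / (1 + Y ω)
  set g : Ω → ℝ := fun ω ↦ (1 + c) / Y ω - (1 + c) / (1 + Y ω)
  have hdecomp : (fun ω ↦ (1 + c) / (1 + (Y ω - X ω))) = φ + g * X := by
    funext ω
    rcases hX01 ω with h | h <;> simp only [φ, g, h, Pi.add_apply, Pi.mul_apply] <;> ring_nf
  have hYm : Measurable[m] Y := hY.measurable
  have hφm : StronglyMeasurable[m] φ :=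
    (measurable_const.div (measurable_const.add hYm)).stronglyMeasurable
  have hgm : StronglyMeasurable[m] g := ((measurable_const.div hYm).sub
    (measurable_const.div (measurable_const.add hYm))).stronglyMeasurable
  have hφ : Integrable φ μ := by
    refine Integrable.of_bound (hφm.mono hm).aestronglyMeasurable (1 + c)
      (ae_of_all _ fun ω ↦ ?_)
    rw [Real.norm_eq_abs, abs_of_nonneg (div_nonneg (by linarith) (by linarith [hY0 ω]))]
    exact div_le_self (by linarith) (by linarith [hY0 ω])
  have hgX : Integrable (g * X) μ := by
    refine Integrable.of_bound ((hgm.mono hm).aestronglyMeasurable.mul hX.aestronglyMeasurable)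
      (1 + c) (ae_of_all _ fun ω ↦ ?_)
    rcases hX01 ω with h | h
    · rw [Pi.mul_apply, h, mul_zero, norm_zero]
      linarith
    -- here `Y ω ≥ 1`, so the junk value of `(1 + c) / 0` in `g` is never seen
    · have hY1 : 1 ≤ Y ω := h ▸ hXY ω
      simp only [Pi.mul_apply, h, mul_one, Real.norm_eq_abs, g]
      exact abs_sub_le_of_nonneg_of_le (by positivity) (div_le_self (by linarith) hY1)
        (by positivity) (div_le_self (by linarith) (by linarith))
  have hpull : μ[fun ω ↦ (1 + c) / (1 + (Y ω - X ω)) | m] =ᵐ[μ] φ + g * μ[X | m] := by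
    rw [hdecomp]
    refine (condExp_add hφ hgX m).trans ?_
    rw [condExp_of_stronglyMeasurable hm hφm hφ]
    exact (condExp_mul_of_stronglyMeasurable_left hgm hgX
      (integrable_of_eq_zero_or_eq_one hX hX01)).add_left
  filter_upwards [hpull, hcond] with ω hpull hcond
  rw [hpull, Pi.add_apply, Pi.mul_apply, hcond]
  simp only [φ, g]
  rcases (hY0 ω).eq_or_lt with h0 | hpos
  · rw [← h0]
    norm_num
  · apply le_of_eq
    field_simp
    ring

end

theorem reverse_supermartingale_bernoulli_general
    {Ω : Type*} [MeasurableSpace Ω] (μ : Measure Ω) [IsProbabilityMeasure μ]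
    (n : ℕ) (ρ : ℝ) (B : ℕ → Ω → ℝ)
    (hmeas : ∀ i, Measurable (B i))
    (h01 : ∀ i ω, B i ω = 0 ∨ B i ω = 1)
    (hber : ∀ i, μ {ω | B i ω = 1} = ENNReal.ofReal ρ)
    (hindep : iIndepFun B μ)
    (S : ℕ → Ω → ℝ) (hS : ∀ j ω, S j ω = ∑ i ∈ Finset.Icc 1 j, B i ω)
    (M : ℕ → Ω → ℝ) (hM : ∀ j ω, M j ω = (1 + (j : ℝ)) / (1 + S j ω))
    (F : ℕ → MeasurableSpace Ω)
    (hF : ∀ j, F j = MeasurableSpace.comap (S j) inferInstance ⊔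
        ⨆ i ∈ Finset.Ioc j n, MeasurableSpace.comap (B i) inferInstance) :
    ∀ j, 1 ≤ j → j ≤ n - 1 → μ[M j | F (j + 1)] ≤ᵐ[μ] M (j + 1) := by
  intro j _ _
  have hident : ∀ i k, μ.map (B i) = μ.map (B k) := fun i k ↦ map_eq_map_of_eq_zero_or_eq_one
    (hmeas i) (hmeas k) (h01 i) (h01 k) ((hber i).trans (hber k).symm)
  have hint : ∀ i, Integrable (B i) μ := fun i ↦ integrable_of_eq_zero_or_eq_one (hmeas i) (h01 i)
  have hSt : S (j + 1) = fun ω ↦ ∑ i ∈ Finset.Icc 1 (j + 1), B i ω := funext (hS (j + 1))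
  have hFG := comap_sum_sup_iSup_comap_le (X := B) (Finset.Icc 1 (j + 1)) (Finset.Ioc (j + 1) n)
    (Finset.disjoint_left.2 fun i hi hi' ↦ by
      simp only [Finset.mem_Icc, Finset.mem_Ioc] at hi hi'
      omega)
  rw [← hSt, ← hF] at hFG
  have hSF : Measurable[F (j + 1)] (S (j + 1)) :=
    (hF (j + 1)).symm ▸ (comap_measurable _).mono le_sup_left le_rfl
  have hcond : μ[B (j + 1) | F (j + 1)] =ᵐ[μ] fun ω ↦ S (j + 1) ω / (1 + j) := by
    refine (hindep.condExp_eq_sum_div_card hmeas hident hint _ hFG (hSt ▸ hSF)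
      (k := j + 1) (by simp)).trans (ae_of_all _ fun ω ↦ ?_)
    simp [hS, add_comm]
  have hSsucc : ∀ ω, S (j + 1) ω = S j ω + B (j + 1) ω := fun ω ↦ by
    rw [hS, hS, Finset.sum_Icc_succ_top (by omega)]
  have hMj : M j = fun ω ↦ (1 + j) / (1 + (S (j + 1) ω - B (j + 1) ω)) := by
    funext ω; rw [hM, hSsucc, add_sub_cancel_right]
  have hMj1 : M (j + 1) = fun ω ↦ (2 + j) / (1 + S (j + 1) ω) := by
    funext ω; rw [hM]; push_cast; ring
  rw [hMj, hMj1]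
  refine condExp_div_one_add_sub_le (hFG.trans (Measurable.comap_le (by fun_prop))) (hmeas _)
    (h01 _) hSF.stronglyMeasurable (fun ω ↦ ?_) j.cast_nonneg hcond
  rw [hSsucc, hS]
  exact le_add_of_nonneg_left
    (Finset.sum_nonneg fun i _ ↦ (h01 i ω).elim (·.ge) (fun h ↦ h ▸ zero_le_one))

/-- For i.i.d. Bernoulli(ρ) variables `B 1, ..., B n`, the process
`M j = (1+j)/(1+S j)` with `S j = B 1 + ... + B j` is a super-martingale in reverse time
with respect to the reverse filtration `F j = σ(S j, B (j+1), ..., B n)`: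
`E[M j | F (j+1)] ≤ M (j+1)` a.e. for all `1 ≤ j ≤ n - 1`. -/
theorem reverse_supermartingale_bernoulli
    {Ω : Type*} [MeasurableSpace Ω] (μ : Measure Ω) [IsProbabilityMeasure μ]
    (n : ℕ) (ρ : ℝ) (hρ : 0 < ρ) (B : ℕ → Ω → ℝ)
    (hmeas : ∀ i, Measurable (B i))
    (h01 : ∀ i ω, B i ω = 0 ∨ B i ω = 1)
    (hber : ∀ i, μ {ω | B i ω = 1} = ENNReal.ofReal ρ)
    (hindep : iIndepFun B μ)
    (S : ℕ → Ω → ℝ) (hS : ∀ j ω, S j ω = ∑ i ∈ Finset.Icc 1 j, B i ω)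
    (M : ℕ → Ω → ℝ) (hM : ∀ j ω, M j ω = (1 + (j : ℝ)) / (1 + S j ω))
    (F : ℕ → MeasurableSpace Ω)
    (hF : ∀ j, F j = MeasurableSpace.comap (S j) inferInstance ⊔
        ⨆ i ∈ Finset.Ioc j n, MeasurableSpace.comap (B i) inferInstance) :
    ∀ j, 1 ≤ j → j ≤ n - 1 → μ[M j | F (j + 1)] ≤ᵐ[μ] M (j + 1) :=
  reverse_supermartingale_bernoulli_general μ n ρ B hmeas h01 hber hindep S hS M hM F hF
end

section
/- Let B_1,...,B_n be i.i.d. Bernoulli(ρ) random variables with ρ > 0, and let J be a stopping time in reverse time with respect to the filtration F_j = σ(B_1 + ... + B_j, B_{j+1}, ..., B_n). Then E[(1+J)/(1+B_1+...+B_J)] ≤ ρ^{-1}. -/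
/-!
Record an outcome by its set of successes `s ⊆ [1, n]`: its law is the product Bernoulli weight
`ρ ^ #s * (1 - ρ) ^ (n - #s)`, and `F m` is generated by `revState m s = (S_m, s ∩ (m, n])`.
Swapping two indices `i, i' ≤ m` preserves both the weight and `revState m`, so given `F m` each
`B i` with `i ≤ m` has conditional mean `S_m / m`. Hence `M_m = countRatio m = (1 + m) / (1 + S_m)`
satisfies `E[M_{m+1} - M_m | F_{m+1}] = 1{S_{m+1} = 0}`. Telescoping
`M_J = 1 + ∑_{m < n} 1{m < J} (M_{m+1} - M_m)` with `{m < J} ∈ F_{m+1}` yields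
`E[M_J] ≤ 1 + ∑_{m < n} P(S_{m+1} = 0) = ∑_{m ≤ n} (1 - ρ) ^ m ≤ ρ⁻¹`.
-/

open MeasureTheory ProbabilityTheory Finset

def headCount (m : ℕ) (s : Finset ℕ) : ℕ := #(s ∩ Icc 1 m)

def revState (m : ℕ) (s : Finset ℕ) : ℕ × Finset ℕ := (headCount m s, {i ∈ s | m < i})

noncomputable def countRatio (m : ℕ) (s : Finset ℕ) : ℝ := (1 + m) / (1 + headCount m s)

def bernoulliWeight (n : ℕ) (ρ : ℝ) (k : ℕ) : ℝ := ρ ^ k * (1 - ρ) ^ (n - k)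

lemma headCount_succ (m : ℕ) (s : Finset ℕ) :
    headCount (m + 1) s = headCount m s + if m + 1 ∈ s then 1 else 0 := by
  unfold headCount
  split_ifs with h
  · rw [← card_insert_of_notMem (s := s ∩ Icc 1 m) (a := m + 1) (by simp)]
    congr 1; ext i; rcases eq_or_ne i (m + 1) with rfl | hne
    · simp [h]
    · simp only [mem_insert, hne, mem_inter, mem_Icc, false_or]
      exact and_congr_right fun _ => by omega
  · congr 1; ext i; rcases eq_or_ne i (m + 1) with rfl | hne
    · simp [h]
    · simp only [mem_inter, mem_Icc]; exact and_congr_right fun _ => by omega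

/- The subtracted term is a function of `headCount (m + 1) s` times
`(m + 1) 1{m + 1 ∈ s} - S_{m+1}`, which has mean zero given `F (m + 1)` by exchangeability. -/
lemma countRatio_succ_sub (m : ℕ) (s : Finset ℕ) :
    countRatio (m + 1) s - countRatio m s =
      (if headCount (m + 1) s = 0 then 1 else 0) -
        ((m + 1 : ℕ) * (if m + 1 ∈ s then 1 else 0) - headCount (m + 1) s) /
          (headCount (m + 1) s * (headCount (m + 1) s + 1)) := by
  simp only [countRatio, headCount_succ]
  split_ifs with hs hk hk <;> push_cast
  · exact hk.elim
  · field_simp; ring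
  · simp_all
  · have : (headCount m s : ℝ) ≠ 0 := by exact_mod_cast hk
    field_simp; ring

lemma revState_eq_of_le {m j : ℕ} (h : m ≤ j) (s : Finset ℕ) :
    revState j s = ((revState m s).1 + headCount j (revState m s).2,
      {i ∈ (revState m s).2 | j < i}) := by
  simp only [revState, headCount, filter_filter]
  refine Prod.ext ?_ ?_
  · dsimp only
    rw [← card_union_of_disjoint]
    · congr 1; ext i
      by_cases hi : i ∈ s
      · simp only [mem_inter, hi, mem_Icc, true_and, mem_union, mem_filter]; omega
      · simp only [mem_inter, hi, false_and, mem_union, mem_filter, or_self]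
    · rw [disjoint_left]; intro i; simp only [mem_inter, mem_filter, mem_Icc]; omega
  · dsimp only
    congr 1; ext i; omega

lemma map_swap_eq_self {α : Type*} [DecidableEq α] {t : Finset α} {i i' : α} (hi : i ∈ t)
    (hi' : i' ∈ t) : t.map (Equiv.swap i i').toEmbedding = t :=
  map_perm fun _ ha => (Equiv.swap_apply_ne_self_iff.1 ha).2.elim (· ▸ hi) (· ▸ hi')

lemma revState_map_swap {m i i' : ℕ} (hi : i ∈ Icc 1 m) (hi' : i' ∈ Icc 1 m) (s : Finset ℕ) :
    revState m (s.map (Equiv.swap i i').toEmbedding) = revState m s := by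
  have hfix : ∀ x, m < x → Equiv.swap i i' x = x := fun x hx => by
    simp only [mem_Icc] at hi hi'
    exact Equiv.swap_apply_of_ne_of_ne (by omega) (by omega)
  simp only [revState, headCount, Prod.mk.injEq]
  constructor
  · rw [← map_swap_eq_self hi hi', ← map_inter, card_map, map_swap_eq_self hi hi']
  · ext x
    simp only [mem_filter, mem_map_equiv, Equiv.symm_swap]
    exact ⟨fun ⟨hx, hmx⟩ => ⟨hfix x hmx ▸ hx, hmx⟩, fun ⟨hx, hmx⟩ => ⟨(hfix x hmx).symm ▸ hx, hmx⟩⟩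

section Exchangeable

variable (f : ℕ → ℝ) (G : ℕ × Finset ℕ → ℝ) {n m : ℕ}

lemma sum_filter_mem_eq_of_mem_Icc {i i' : ℕ} (hi : i ∈ Icc 1 m) (hi' : i' ∈ Icc 1 m)
    (hm : m ≤ n) :
    ∑ s ∈ (Icc 1 n).powerset with i ∈ s, f #s * G (revState m s) =
      ∑ s ∈ (Icc 1 n).powerset with i' ∈ s, f #s * G (revState m s) := by
  have hIcc : Icc 1 m ⊆ Icc 1 n := Icc_subset_Icc_right hm
  refine sum_equiv (Equiv.swap i i').finsetCongr (fun s => ?_) (fun s _ => ?_)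
  · rw [mem_filter, mem_filter, mem_powerset, mem_powerset, Equiv.finsetCongr_apply,
      mem_map_equiv, Equiv.symm_swap, Equiv.swap_apply_right,
      ← map_subset_map (f := (Equiv.swap i i').toEmbedding),
      map_swap_eq_self (hIcc hi) (hIcc hi')]
  · rw [Equiv.finsetCongr_apply, card_map, revState_map_swap hi hi']

lemma sum_mul_sub_headCount_eq_zero (hm : m ≤ n) :
    ∑ s ∈ (Icc 1 n).powerset,
      f #s * G (revState m s) * (m * (if m ∈ s then 1 else 0) - headCount m s) = 0 := by
  have hcount : ∀ s, (headCount m s : ℝ) = ∑ i ∈ Icc 1 m, if i ∈ s then 1 else 0 := fun s => by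
    rw [← natCast_card_filter, headCount, filter_mem_eq_inter, inter_comm]
  have hexchange : ∀ i ∈ Icc 1 m,
      ∑ s ∈ (Icc 1 n).powerset with i ∈ s, f #s * G (revState m s) =
        ∑ s ∈ (Icc 1 n).powerset with m ∈ s, f #s * G (revState m s) := fun i hi => by
    have hm1 : 1 ≤ m := (mem_Icc.1 hi).1.trans (mem_Icc.1 hi).2
    exact sum_filter_mem_eq_of_mem_Icc f G hi (right_mem_Icc.2 hm1) hm
  have hmem : ∑ s ∈ (Icc 1 n).powerset, f #s * G (revState m s) * (m * if m ∈ s then 1 else 0) =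
      m * ∑ s ∈ (Icc 1 n).powerset with m ∈ s, f #s * G (revState m s) := by
    rw [sum_filter, mul_sum]
    refine sum_congr rfl fun s _ => ?_
    split_ifs <;> ring
  have hhead : ∑ s ∈ (Icc 1 n).powerset, f #s * G (revState m s) * headCount m s =
      ∑ i ∈ Icc 1 m, ∑ s ∈ (Icc 1 n).powerset with i ∈ s, f #s * G (revState m s) := by
    simp_rw [hcount, mul_sum, sum_filter]
    rw [sum_comm]
    simp
  simp_rw [mul_sub, sum_sub_distrib]
  rw [hmem, hhead, sum_congr rfl hexchange, sum_const, Nat.card_Icc, nsmul_eq_mul]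
  simp

lemma sum_mul_countRatio_succ_sub (hm : m + 1 ≤ n) :
    ∑ s ∈ (Icc 1 n).powerset,
      f #s * G (revState (m + 1) s) * (countRatio (m + 1) s - countRatio m s) =
    ∑ s ∈ (Icc 1 n).powerset,
      f #s * G (revState (m + 1) s) * (if headCount (m + 1) s = 0 then 1 else 0) := by
  have hmean := sum_mul_sub_headCount_eq_zero f (fun x => G x / (x.1 * (x.1 + 1))) hm
  simp_rw [countRatio_succ_sub, mul_sub, sum_sub_distrib, sub_eq_self]
  refine (sum_congr rfl fun s _ => ?_).trans hmean
  simp only [revState]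
  ring

end Exchangeable

lemma sum_bernoulliWeight_filter_headCount_eq_zero (ρ : ℝ) {n m : ℕ} (hm : m ≤ n) :
    ∑ s ∈ (Icc 1 n).powerset with headCount m s = 0, bernoulliWeight n ρ #s = (1 - ρ) ^ m := by
  have hfilter : {s ∈ (Icc 1 n).powerset | headCount m s = 0} = (Ioc m n).powerset := by
    ext s
    simp only [mem_filter, mem_powerset, headCount, card_eq_zero, ← disjoint_iff_inter_eq_empty,
      subset_iff, disjoint_left, mem_Icc, mem_Ioc]
    exact ⟨fun ⟨hn, hm⟩ i hi => ⟨not_le.1 fun h => hm hi ⟨(hn hi).1, h⟩, (hn hi).2⟩,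
      fun h => ⟨fun i hi => ⟨by have := h hi; omega, (h hi).2⟩, fun i hi hm => by have := h hi; omega⟩⟩
  rw [hfilter]
  calc ∑ s ∈ (Ioc m n).powerset, bernoulliWeight n ρ #s
      = (1 - ρ) ^ m * ∑ s ∈ (Ioc m n).powerset, ρ ^ #s * (1 - ρ) ^ (#(Ioc m n) - #s) := by
        rw [mul_sum]
        refine sum_congr rfl fun s hs => ?_
        have : #s ≤ n - m := Nat.card_Ioc m n ▸ card_le_card (mem_powerset.1 hs)
        rw [bernoulliWeight, Nat.card_Ioc, show n - #s = (n - m - #s) + m by omega, pow_add]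
        ring
    _ = (1 - ρ) ^ m := by rw [sum_pow_mul_eq_add_pow]; simp

lemma sum_bernoulliWeight_mul_indicator_mul_countRatio_succ_sub_le {ρ : ℝ} (hρ0 : 0 ≤ ρ)
    (hρ1 : ρ ≤ 1) (E : Set (ℕ × Finset ℕ)) {n m : ℕ} (hm : m + 1 ≤ n) :
    ∑ s ∈ (Icc 1 n).powerset, bernoulliWeight n ρ #s * E.indicator 1 (revState (m + 1) s) *
      (countRatio (m + 1) s - countRatio m s) ≤ (1 - ρ) ^ (m + 1) := by
  rw [sum_mul_countRatio_succ_sub _ _ hm, ← sum_bernoulliWeight_filter_headCount_eq_zero ρ hm,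
    sum_filter]
  refine sum_le_sum fun s _ => ?_
  have hw : 0 ≤ bernoulliWeight n ρ #s := by
    have : 0 ≤ 1 - ρ := by linarith
    unfold bernoulliWeight; positivity
  have hE : E.indicator 1 (revState (m + 1) s) ≤ (1 : ℝ) := Set.indicator_le_self' (by simp) _
  split_ifs
  · simpa using mul_le_of_le_one_right hw hE
  · simp

lemma eq_add_sum_range_ite_sub (g : ℕ → ℝ) {J n : ℕ} (h : J ≤ n) :
    g J = g 0 + ∑ m ∈ range n, if m < J then g (m + 1) - g m else 0 := by
  rw [← sum_filter, show {m ∈ range n | m < J} = range J by ext; simp only [mem_filter, mem_range]; omega,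
    sum_range_sub]
  ring

lemma sum_bernoulliWeight_mul_stopped_countRatio_le {ρ : ℝ} (hρ0 : 0 < ρ) (hρ1 : ρ ≤ 1)
    (n : ℕ) (E : ℕ → Set (ℕ × Finset ℕ)) :
    ∑ s ∈ (Icc 1 n).powerset, bernoulliWeight n ρ #s * (1 + ∑ m ∈ range n,
      (E m).indicator 1 (revState (m + 1) s) * (countRatio (m + 1) s - countRatio m s)) ≤
      ρ⁻¹ := by
  have htotal : ∑ s ∈ (Icc 1 n).powerset, bernoulliWeight n ρ #s = 1 := by
    simpa [bernoulliWeight] using sum_pow_mul_eq_add_pow ρ (1 - ρ) (Icc 1 n)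
  calc _ = 1 + ∑ m ∈ range n, ∑ s ∈ (Icc 1 n).powerset, bernoulliWeight n ρ #s *
        (E m).indicator 1 (revState (m + 1) s) * (countRatio (m + 1) s - countRatio m s) := by
        simp_rw [mul_add, mul_one, sum_add_distrib, htotal, mul_sum, mul_assoc]
        rw [sum_comm]
    _ ≤ 1 + ∑ m ∈ range n, (1 - ρ) ^ (m + 1) := by
        gcongr with m hm
        exact sum_bernoulliWeight_mul_indicator_mul_countRatio_succ_sub_le hρ0.le hρ1 _
          (mem_range.1 hm)
    _ = ∑ m ∈ Ico 0 (n + 1), (1 - ρ) ^ m := by rw [← range_eq_Ico, sum_range_succ']; ring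
    _ ≤ (1 - ρ) ^ 0 / (1 - (1 - ρ)) := geom_sum_Ico_le_of_lt_one (by linarith) (by linarith)
    _ = ρ⁻¹ := by simp

lemma comap_comp_le_comap_top {Ω α β : Type*} (mβ : MeasurableSpace β) (φ : α → β) (f : Ω → α) :
    mβ.comap (φ ∘ f) ≤ (⊤ : MeasurableSpace α).comap f := by
  rw [← MeasurableSpace.comap_comp]
  exact MeasurableSpace.comap_mono le_top

lemma comap_revState_comp_le {Ω : Type*} {m j : ℕ} (h : m ≤ j) (c : Ω → Finset ℕ) :
    (⊤ : MeasurableSpace _).comap (revState j ∘ c) ≤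
      (⊤ : MeasurableSpace _).comap (revState m ∘ c) := by
  have : revState j ∘ c =
      (fun x : ℕ × Finset ℕ => (x.1 + headCount j x.2, {i ∈ x.2 | j < i})) ∘ revState m ∘ c :=
    funext fun ω => revState_eq_of_le h (c ω)
  rw [this]
  exact comap_comp_le_comap_top ⊤ _ _

lemma measurableSet_lt_of_forall_measurableSet_eq {Ω : Type*} {n : ℕ} {c : Ω → Finset ℕ}
    {J : Ω → ℕ} (hJ : ∀ ω, J ω ≤ n)
    (hstop : ∀ j ≤ n, MeasurableSet[(⊤ : MeasurableSpace _).comap (revState j ∘ c)] {ω | J ω = j})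
    (m : ℕ) :
    MeasurableSet[(⊤ : MeasurableSpace _).comap (revState (m + 1) ∘ c)] {ω | m < J ω} := by
  have : {ω | m < J ω} = ⋃ j ∈ Ioc m n, {ω | J ω = j} := by
    ext ω; simp only [Set.mem_ofPred_eq, Set.mem_iUnion, mem_Ioc, exists_prop]
    exact ⟨fun h => ⟨J ω, ⟨h, hJ ω⟩, rfl⟩, fun ⟨j, ⟨hj, _⟩, hJj⟩ => hJj ▸ hj⟩
  rw [this]
  exact measurableSet_biUnion _ fun j hj =>
    comap_revState_comp_le (mem_Ioc.1 hj).1 c _ (hstop j (mem_Ioc.1 hj).2)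

section Bernoulli

variable {Ω : Type*} {n : ℕ} {B : ℕ → Ω → ℝ}

noncomputable def successes (n : ℕ) (B : ℕ → Ω → ℝ) (ω : Ω) : Finset ℕ :=
  {i ∈ Icc 1 n | B i ω = 1}

lemma sum_Icc_eq_headCount_successes (h01 : ∀ i ω, B i ω = 0 ∨ B i ω = 1) {m : ℕ} (hm : m ≤ n)
    (ω : Ω) : ∑ i ∈ Icc 1 m, B i ω = headCount m (successes n B ω) := by
  have : successes n B ω ∩ Icc 1 m = {i ∈ Icc 1 m | B i ω = 1} := by
    ext i; simp only [successes, mem_inter, mem_filter, mem_Icc]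
    exact ⟨fun ⟨⟨_, hB⟩, hi⟩ => ⟨hi, hB⟩, fun ⟨hi, hB⟩ => ⟨⟨⟨hi.1, hi.2.trans hm⟩, hB⟩, hi⟩⟩
  rw [headCount, this, natCast_card_filter]
  refine sum_congr rfl fun i _ => ?_
  rcases h01 i ω with h | h <;> simp [h]

lemma comap_sum_sup_le_comap_revState (h01 : ∀ i ω, B i ω = 0 ∨ B i ω = 1) {j : ℕ} (hj : j ≤ n)
    {S : Ω → ℝ} (hS : ∀ ω, S ω = ∑ i ∈ Icc 1 j, B i ω) :
    MeasurableSpace.comap S inferInstance ⊔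
        ⨆ i ∈ Ioc j n, MeasurableSpace.comap (B i) inferInstance ≤
      (⊤ : MeasurableSpace _).comap (revState j ∘ successes n B) := by
  refine sup_le ?_ (iSup₂_le fun i hi => ?_)
  · have : S = (fun x : ℕ × Finset ℕ => (x.1 : ℝ)) ∘ revState j ∘ successes n B :=
      funext fun ω => by simp [hS, sum_Icc_eq_headCount_successes h01 hj, revState]
    rw [this]
    exact comap_comp_le_comap_top _ _ _
  · have : B i =
        (fun x : ℕ × Finset ℕ => if i ∈ x.2 then 1 else 0) ∘ revState j ∘ successes n B := by
      funext ω
      obtain ⟨hji, hin⟩ := mem_Ioc.1 hi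
      have hi1 : 1 ≤ i := by omega
      rcases h01 i ω with h | h <;> simp [revState, successes, h, hji, hin, hi1]
    rw [this]
    exact comap_comp_le_comap_top _ _ _

lemma successes_preimage_singleton (h01 : ∀ i ω, B i ω = 0 ∨ B i ω = 1) {s : Finset ℕ}
    (hs : s ⊆ Icc 1 n) :
    successes n B ⁻¹' {s} = ⋂ i ∈ Icc 1 n, B i ⁻¹' {if i ∈ s then 1 else 0} := by
  ext ω
  simp only [Set.mem_preimage, Set.mem_singleton_iff, Set.mem_iInter]
  constructor
  · rintro rfl i hi
    split_ifs with h
    · exact (mem_filter.1 h).2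
    · exact (h01 i ω).resolve_right fun h' => h (mem_filter.2 ⟨hi, h'⟩)
  · intro h
    ext i
    simp only [successes, mem_filter]
    constructor
    · rintro ⟨hi, hB⟩
      by_contra his
      simpa [his, hB] using h i hi
    · intro his
      simpa [his] using And.intro (hs his) (h i (hs his))

variable [MeasurableSpace Ω] {μ : Measure Ω} [IsProbabilityMeasure μ] {ρ : ℝ}
  (hmeas : ∀ i, Measurable (B i)) (h01 : ∀ i ω, B i ω = 0 ∨ B i ω = 1)
  (hber : ∀ i, μ {ω | B i ω = 1} = ENNReal.ofReal ρ) (hindep : iIndepFun B μ)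
include hmeas h01 hber

lemma measure_preimage_zero (hρ0 : 0 ≤ ρ) (i : ℕ) :
    μ (B i ⁻¹' {0}) = ENNReal.ofReal (1 - ρ) := by
  have : B i ⁻¹' {0} = (B i ⁻¹' {1})ᶜ := by
    ext ω; rcases h01 i ω with h | h <;> simp [h]
  rw [this, prob_compl_eq_one_sub (hmeas i (measurableSet_singleton 1)),
    show μ (B i ⁻¹' {1}) = ENNReal.ofReal ρ from hber i,
    ENNReal.ofReal_sub _ hρ0, ENNReal.ofReal_one]

include hindep

lemma measure_successes_preimage_singleton (hρ0 : 0 ≤ ρ) {s : Finset ℕ} (hs : s ⊆ Icc 1 n) :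
    μ (successes n B ⁻¹' {s}) = ENNReal.ofReal ρ ^ #s * ENNReal.ofReal (1 - ρ) ^ (n - #s) := by
  have hfactor : ∀ i, μ (B i ⁻¹' {if i ∈ s then 1 else 0}) =
      if i ∈ s then ENNReal.ofReal ρ else ENNReal.ofReal (1 - ρ) := fun i => by
    split_ifs
    · exact hber i
    · exact measure_preimage_zero hmeas h01 hber hρ0 i
  rw [successes_preimage_singleton h01 hs,
    hindep.measure_inter_preimage_eq_mul _ fun _ _ => measurableSet_singleton _]
  simp_rw [hfactor]
  rw [prod_ite, prod_const, prod_const, filter_mem_eq_inter, inter_eq_right.2 hs, filter_not,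
    filter_mem_eq_inter, inter_eq_right.2 hs, card_sdiff_of_subset hs, Nat.card_Icc,
    Nat.add_sub_cancel]

lemma integral_comp_successes (hρ0 : 0 ≤ ρ) (hρ1 : ρ ≤ 1) (G : Finset ℕ → ℝ) :
    ∫ ω, G (successes n B ω) ∂μ = ∑ s ∈ (Icc 1 n).powerset, bernoulliWeight n ρ #s * G s := by
  have hfiber : ∀ s ∈ (Icc 1 n).powerset, MeasurableSet (successes n B ⁻¹' {s}) := fun s hs => by
    rw [successes_preimage_singleton h01 (mem_powerset.1 hs)]
    exact measurableSet_biInter _ fun i _ => hmeas i (measurableSet_singleton _)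
  have hsplit : ∀ ω, G (successes n B ω) =
      ∑ s ∈ (Icc 1 n).powerset, (successes n B ⁻¹' {s}).indicator (fun _ => G s) ω := fun ω => by
    rw [sum_eq_single_of_mem (successes n B ω) (mem_powerset.2 (filter_subset _ _))]
    · simp
    · intro t _ ht
      simp [Ne.symm ht]
  simp_rw [hsplit]
  rw [integral_finsetSum _ fun s hs => (integrable_const _).indicator (hfiber s hs)]
  refine sum_congr rfl fun s hs => ?_
  rw [integral_indicator_const _ (hfiber s hs), measureReal_def,
    measure_successes_preimage_singleton hmeas h01 hber hindep hρ0 (mem_powerset.1 hs),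
    smul_eq_mul, ENNReal.toReal_mul, ENNReal.toReal_pow, ENNReal.toReal_pow,
    ENNReal.toReal_ofReal hρ0, ENNReal.toReal_ofReal (sub_nonneg.2 hρ1), bernoulliWeight]

end Bernoulli

/-- Lemma 1 (i.i.d. case): for i.i.d. Bernoulli(ρ) variables `B 1, ..., B n` with `ρ > 0`
and a stopping time `J` in reverse time with respect to the reverse filtration
`F j = σ(B 1 + ... + B j, B (j+1), ..., B n)`, one has
`E[(1+J)/(1+B 1+...+B J)] ≤ ρ⁻¹`. -/
theorem reverse_stopping_time_bound_iid
    {Ω : Type*} [MeasurableSpace Ω] (μ : Measure Ω) [IsProbabilityMeasure μ]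
    (n : ℕ) (ρ : ℝ) (hρ : 0 < ρ) (B : ℕ → Ω → ℝ)
    (hmeas : ∀ i, Measurable (B i))
    (h01 : ∀ i ω, B i ω = 0 ∨ B i ω = 1)
    (hber : ∀ i, μ {ω | B i ω = 1} = ENNReal.ofReal ρ)
    (hindep : iIndepFun B μ)
    (S : ℕ → Ω → ℝ) (hS : ∀ j ω, S j ω = ∑ i ∈ Finset.Icc 1 j, B i ω)
    (F : ℕ → MeasurableSpace Ω)
    (hF : ∀ j, F j = MeasurableSpace.comap (S j) inferInstance ⊔
        ⨆ i ∈ Finset.Ioc j n, MeasurableSpace.comap (B i) inferInstance)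
    (J : Ω → ℕ) (hJrange : ∀ ω, 1 ≤ J ω ∧ J ω ≤ n)
    (hJstop : ∀ j, MeasurableSet[F j] {ω | J ω = j}) :
    ∫ ω, (1 + (J ω : ℝ)) / (1 + S (J ω) ω) ∂μ ≤ ρ⁻¹ := by
  have hρ1 : ρ ≤ 1 := ENNReal.ofReal_le_one.1 (hber 1 ▸ prob_le_one)
  have hJn : ∀ ω, J ω ≤ n := fun ω => (hJrange ω).2
  choose E _ hE using measurableSet_lt_of_forall_measurableSet_eq hJn fun j hj =>
    comap_sum_sup_le_comap_revState h01 hj (hS j) _ (hF j ▸ hJstop j)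
  have hstopped : ∀ ω, (1 + (J ω : ℝ)) / (1 + S (J ω) ω) = 1 + ∑ m ∈ range n,
      (E m).indicator 1 (revState (m + 1) (successes n B ω)) *
        (countRatio (m + 1) (successes n B ω) - countRatio m (successes n B ω)) := fun ω => by
    set c := successes n B ω
    rw [hS, sum_Icc_eq_headCount_successes h01 (hJn ω)]
    change countRatio (J ω) c = _
    rw [eq_add_sum_range_ite_sub (countRatio · c) (hJn ω)]
    congr 1
    · simp [countRatio, headCount]
    refine sum_congr rfl fun m _ => ?_
    have hmem : revState (m + 1) c ∈ E m ↔ m < J ω := Set.ext_iff.1 (hE m) ω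
    by_cases h : m < J ω <;> simp [hmem, h]
  rw [integral_congr_ae (ae_of_all _ hstopped),
    integral_comp_successes hmeas h01 hber hindep hρ.le hρ1
      (fun s => 1 + ∑ m ∈ range n, (E m).indicator 1 (revState (m + 1) s) *
        (countRatio (m + 1) s - countRatio m s))]
  exact sum_bernoulliWeight_mul_stopped_countRatio_le hρ hρ1 n E
end

section
/- Consider the Lasso problem min_γ (1/2)‖y − Xγ‖_2^2 + λ‖γ‖_1 where X^⊤X is invertible. A vector γ̂ supported on S with sign vector v̂_S = sign(γ̂_S) satisfies the KKT stationarity conditions, and its support is contained in S = supp(γ*), provided that for all v̂_S ∈ [−1,1]^S: ‖λ X_{S^c}^⊤ X_S (X_S^⊤ X_S)^{-1} v̂_S + X_{S^c}^⊤ (I − Π_S)(Xε)‖_∞ < λ, where Π_S = X_S(X_S^⊤ X_S)^{-1} X_S^⊤ and y = X_S γ*_S + X ε. -/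
/-!
Primal–dual witness argument. Minimise the Lasso restricted to the columns in `S`; its optimality
conditions give a sign vector `v ∈ [-1,1]^S` with `X_Sᵀ r = λ v` for the restricted residual `r`.
Since `X_Sᵀ X_S` is invertible, `Π_S X_S = X_S`, so `r = λ X_S (X_Sᵀ X_S)⁻¹ v + (I - Π_S) X ε`, and
the hypothesis says exactly that `|X_iᵀ r| < λ` off `S`. Extending the restricted minimiser by zero
therefore yields a KKT point of the full Lasso whose dual vector lies strictly inside `(-1,1)`
off `S`. Any minimiser `γ̂` then satisfies `‖γ̂‖₁ ≤ ⟨v, γ̂⟩`, which forces `γ̂_i = 0` wherever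
`|v_i| < 1`.
-/

open Matrix

open Filter Topology in
theorem nonneg_of_forall_sq_add_mul_nonneg {a b c : ℝ} (hc : 0 < c)
    (h : ∀ s, 0 < s → s < c → 0 ≤ a * s ^ 2 + b * s) : 0 ≤ b := by
  have hcont : Continuous fun s : ℝ => a * s + b := by fun_prop
  have hlim : Tendsto (fun s => a * s + b) (𝓝[>] 0) (𝓝 b) := by
    simpa using (hcont.tendsto 0).mono_left nhdsWithin_le_nhds
  refine ge_of_tendsto hlim ?_
  filter_upwards [Ioo_mem_nhdsGT hc] with s ⟨hs0, hsc⟩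
  have := h s hs0 hsc
  nlinarith

theorem abs_le_and_mul_eq_of_forall_nonneg {a g c lam : ℝ} (hlam : 0 ≤ lam)
    (h : ∀ t, 0 ≤ a * t ^ 2 - g * t + lam * (|c + t| - |c|)) :
    |g| ≤ lam ∧ g * c = lam * |c| := by
  have hup : 0 ≤ lam - g := nonneg_of_forall_sq_add_mul_nonneg (a := a) one_pos fun s hs _ => by
    have := h s
    have : |c + s| - |c| ≤ s := by linarith [abs_add_le c s, abs_of_pos hs]
    nlinarith
  have hlow : 0 ≤ lam + g := nonneg_of_forall_sq_add_mul_nonneg (a := a) one_pos fun s hs _ => by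
    have := h (-s)
    have : |c + -s| - |c| ≤ s := by linarith [abs_add_le c (-s), abs_neg s, abs_of_pos hs]
    nlinarith
  refine ⟨abs_le.2 ⟨by linarith, by linarith⟩, ?_⟩
  -- for `c ≠ 0`, moving `t` towards `0` decreases `|c + t|` at unit rate and pins `g` to `λ sign c`
  rcases lt_trichotomy c 0 with hc | rfl | hc
  · have : 0 ≤ -g - lam :=
      nonneg_of_forall_sq_add_mul_nonneg (a := a) (neg_pos.2 hc) fun s hs hsc => by
      have := h s
      rw [abs_of_neg hc, abs_of_neg (by linarith : c + s < 0)] at this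
      linarith
    rw [abs_of_neg hc]; nlinarith
  · simp
  · have : 0 ≤ g - lam := nonneg_of_forall_sq_add_mul_nonneg (a := a) hc fun s hs hsc => by
      have := h (-s)
      rw [abs_of_pos hc, abs_of_pos (by linarith : 0 < c + -s)] at this
      linarith
    rw [abs_of_pos hc]; nlinarith

theorem eq_zero_of_sum_abs_le_dotProduct {ι : Type*} [Fintype ι] {v γ : ι → ℝ}
    (hv : ∀ i, |v i| ≤ 1) (h : ∑ i, |γ i| ≤ v ⬝ᵥ γ) {i : ι} (hi : |v i| < 1) : γ i = 0 := by
  by_contra hγ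
  have hle (j : ι) : v j * γ j ≤ |γ j| :=
    (le_abs_self _).trans <| by rw [abs_mul]; exact mul_le_of_le_one_left (abs_nonneg _) (hv j)
  have hlt : v i * γ i < |γ i| :=
    (le_abs_self _).trans_lt <| by rw [abs_mul]; exact mul_lt_of_lt_one_left (abs_pos.2 hγ) hi
  exact (Finset.sum_lt_sum (fun j _ => hle j) ⟨i, Finset.mem_univ i, hlt⟩).not_ge h

theorem Matrix.isUnit_det_transpose_mul_self_iff {κ n : Type*} [Fintype κ] [Fintype n]
    [DecidableEq n] (M : Matrix κ n ℝ) :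
    IsUnit (Mᵀ * M).det ↔ Function.Injective M.mulVec := by
  have hker := ker_mulVecLin_conjTranspose_mul_self M
  rw [conjTranspose_eq_transpose_of_trivial] at hker
  rw [← isUnit_iff_isUnit_det, ← mulVec_injective_iff_isUnit, ← coe_mulVecLin,
    ← LinearMap.ker_eq_bot, hker, LinearMap.ker_eq_bot, coe_mulVecLin]

theorem Matrix.mulVec_add_eq_of_isUnit_det_transpose_mul_self {R κ n : Type*} [CommRing R]
    [Fintype κ] [Fintype n] [DecidableEq κ] [DecidableEq n] {M : Matrix κ n R}
    (hM : IsUnit (Mᵀ * M).det) (c : n → R) (e : κ → R) :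
    M *ᵥ c + e = M *ᵥ ((Mᵀ * M)⁻¹ *ᵥ (Mᵀ *ᵥ (M *ᵥ c + e))) + (1 - M * (Mᵀ * M)⁻¹ * Mᵀ) *ᵥ e := by
  have hP : M * (Mᵀ * M)⁻¹ * Mᵀ * M = M := by
    rw [Matrix.mul_assoc _ Mᵀ, Matrix.mul_assoc, nonsing_inv_mul _ hM, Matrix.mul_one]
  rw [mulVec_mulVec, mulVec_mulVec, mulVec_add, mulVec_mulVec, hP, sub_mulVec, one_mulVec]
  abel

section Restriction

variable {R κ ι : Type*} [NonUnitalNonAssocSemiring R] [Fintype ι] {S : Finset ι}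

theorem Matrix.submatrix_val_mulVec_of_forall_notMem (X : Matrix κ ι R) {u : ι → R}
    (hu : ∀ i ∉ S, u i = 0) : X.submatrix id ((↑) : S → ι) *ᵥ (fun j => u j) = X *ᵥ u := by
  ext k
  simp only [mulVec, dotProduct, submatrix_apply, id]
  rw [Finset.sum_coe_sort S (fun i => X k i * u i)]
  exact Finset.sum_subset (Finset.subset_univ S) fun i _ hi => by rw [hu i hi, mul_zero]

theorem Matrix.submatrix_val_mulVec (X : Matrix κ ι R) (β : S → R) :
    X.submatrix id ((↑) : S → ι) *ᵥ β = X *ᵥ Function.extend (↑) β 0 := by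
  conv_lhs => rw [← funext (Subtype.val_injective.extend_apply β 0)]
  exact X.submatrix_val_mulVec_of_forall_notMem fun i hi => Function.extend_val_apply' hi

theorem Matrix.injective_submatrix_val_mulVec {X : Matrix κ ι R}
    (hX : Function.Injective X.mulVec) :
    Function.Injective (X.submatrix id ((↑) : S → ι)).mulVec := fun β₁ β₂ h => by
  rw [X.submatrix_val_mulVec, X.submatrix_val_mulVec] at h
  funext j
  simpa only [Subtype.val_injective.extend_apply] using congrFun (hX h) j

end Restriction

namespace Lasso

variable {κ ι : Type*} [Fintype κ] [Fintype ι]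

noncomputable def objective (X : Matrix κ ι ℝ) (y : κ → ℝ) (lam : ℝ) (γ : ι → ℝ) : ℝ :=
  (1 / 2) * (∑ k, (y k - X.mulVec γ k) ^ 2) + lam * ∑ i, |γ i|

/-- `|v i| ≤ 1 ∧ v i * γ i = |γ i|` says that `v i` is a subgradient of `|·|` at `γ i`, i.e.
`v i = sign (γ i)` whenever `γ i ≠ 0`. -/
def IsKKT (X : Matrix κ ι ℝ) (y : κ → ℝ) (lam : ℝ) (γ v : ι → ℝ) : Prop :=
  Xᵀ *ᵥ (y - X *ᵥ γ) = lam • v ∧ ∀ i, |v i| ≤ 1 ∧ v i * γ i = |γ i|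

variable (X : Matrix κ ι ℝ) (y : κ → ℝ) (lam : ℝ)

theorem objective_add (γ d : ι → ℝ) :
    objective X y lam (γ + d) = objective X y lam γ - (Xᵀ *ᵥ (y - X *ᵥ γ)) ⬝ᵥ d
      + (1 / 2) * (X *ᵥ d) ⬝ᵥ (X *ᵥ d) + lam * ∑ i, (|γ i + d i| - |γ i|) := by
  rw [mulVec_transpose, ← dotProduct_mulVec]
  simp only [objective, mulVec_add, dotProduct, Pi.add_apply, Pi.sub_apply]
  have hsq : ∑ k, (y k - ((X *ᵥ γ) k + (X *ᵥ d) k)) ^ 2 = ∑ k, (y k - (X *ᵥ γ) k) ^ 2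
      - 2 * ∑ k, (y k - (X *ᵥ γ) k) * (X *ᵥ d) k + ∑ k, (X *ᵥ d) k * (X *ᵥ d) k := by
    rw [Finset.mul_sum, ← Finset.sum_sub_distrib, ← Finset.sum_add_distrib]
    exact Finset.sum_congr rfl fun k _ => by ring
  rw [hsq, Finset.sum_sub_distrib]
  ring

theorem continuous_objective : Continuous (objective X y lam) := by
  unfold objective
  fun_prop

open Filter in
theorem exists_forall_objective_le (hlam : 0 < lam) :
    ∃ β, ∀ γ, objective X y lam β ≤ objective X y lam γ := by
  refine (continuous_objective X y lam).exists_forall_le <|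
    tendsto_atTop_mono (fun γ => ?_) (tendsto_norm_cocompact_atTop.const_mul_atTop hlam)
  have hnorm : ‖γ‖ ≤ ∑ i, |γ i| := (pi_norm_le_iff_of_nonneg (by positivity)).2 fun i =>
    Finset.single_le_sum (f := fun i => |γ i|) (fun i _ => abs_nonneg _) (Finset.mem_univ i)
  have : 0 ≤ (1 / 2 : ℝ) * ∑ k, (y k - X.mulVec γ k) ^ 2 := by positivity
  unfold objective
  nlinarith

variable {X y lam}

theorem exists_isKKT_of_forall_objective_le (hlam : 0 < lam) {β : ι → ℝ}
    (hβ : ∀ γ, objective X y lam β ≤ objective X y lam γ) : ∃ v, IsKKT X y lam β v := by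
  classical
  set g := Xᵀ *ᵥ (y - X *ᵥ β)
  have hcoord (j : ι) : |g j| ≤ lam ∧ g j * β j = lam * |β j| := by
    refine abs_le_and_mul_eq_of_forall_nonneg (a := (1 / 2) * ∑ k, X k j ^ 2) hlam.le fun t => ?_
    have hcol : X *ᵥ Pi.single j t = fun k => X k j * t := funext fun k => dotProduct_single _ _ _
    have habs : ∑ i, (|β i + Pi.single (M := fun _ => ℝ) j t i| - |β i|) = |β j + t| - |β j| :=
      (Finset.sum_eq_single j (fun i _ hij => by simp [hij]) (by simp)).trans (by simp)
    have hsq : (fun k => X k j * t) ⬝ᵥ (fun k => X k j * t) = (∑ k, X k j ^ 2) * t ^ 2 := by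
      simp only [dotProduct, Finset.sum_mul]
      exact Finset.sum_congr rfl fun k _ => by ring
    have h := hβ (β + Pi.single j t)
    rw [objective_add, dotProduct_single, hcol, hsq, habs] at h
    linarith
  refine ⟨lam⁻¹ • g, by rw [smul_smul, mul_inv_cancel₀ hlam.ne', one_smul], fun j => ?_⟩
  simp only [Pi.smul_apply, smul_eq_mul, abs_mul, abs_inv, abs_of_pos hlam]
  constructor
  · exact inv_mul_le_one_of_le₀ (hcoord j).1 hlam.le
  · rw [mul_assoc, (hcoord j).2, inv_mul_cancel_left₀ hlam.ne']

theorem IsKKT.eq_zero_of_objective_le {γ₀ v : ι → ℝ} (hkkt : IsKKT X y lam γ₀ v) (hlam : 0 < lam)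
    {γ : ι → ℝ} (hγ : objective X y lam γ ≤ objective X y lam γ₀) {i : ι} (hi : |v i| < 1) :
    γ i = 0 := by
  obtain ⟨hstat, hv⟩ := hkkt
  refine eq_zero_of_sum_abs_le_dotProduct (fun j => (hv j).1) ?_ hi
  have hvγ₀ : v ⬝ᵥ γ₀ = ∑ j, |γ₀ j| := Finset.sum_congr rfl fun j _ => (hv j).2
  have hXd : 0 ≤ (X *ᵥ (γ - γ₀)) ⬝ᵥ (X *ᵥ (γ - γ₀)) :=
    Finset.sum_nonneg fun k _ => mul_self_nonneg _
  rw [← add_sub_cancel γ₀ γ, objective_add, hstat, smul_dotProduct, dotProduct_sub, hvγ₀,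
    smul_eq_mul] at hγ
  simp only [Pi.sub_apply, add_sub_cancel, Finset.sum_sub_distrib] at hγ
  have : lam * (∑ j, |γ j| - v ⬝ᵥ γ) ≤ 0 := by nlinarith
  exact sub_nonpos.1 (nonpos_of_mul_nonpos_right this hlam)

theorem IsKKT.exists_extend_val {S : Finset ι} {β v : S → ℝ}
    (hkkt : IsKKT (X.submatrix id (↑)) y lam β v) (hlam : 0 < lam)
    (hoff : ∀ i ∉ S, |(Xᵀ *ᵥ (y - X.submatrix id (↑) *ᵥ β)) i| < lam) :
    ∃ V, IsKKT X y lam (Function.extend (↑) β 0) V ∧ ∀ i ∉ S, |V i| < 1 := by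
  obtain ⟨hstat, hv⟩ := hkkt
  rw [X.submatrix_val_mulVec] at hstat hoff
  set g := Xᵀ *ᵥ (y - X *ᵥ Function.extend (↑) β 0)
  have hdual (i : ι) (hi : i ∉ S) : |(lam⁻¹ • g) i| < 1 := by
    rw [Pi.smul_apply, smul_eq_mul, abs_mul, abs_inv, abs_of_pos hlam]
    exact (inv_mul_lt_one₀ hlam).2 (hoff i hi)
  refine ⟨lam⁻¹ • g, ⟨by rw [smul_smul, mul_inv_cancel₀ hlam.ne', one_smul], fun i => ?_⟩, hdual⟩
  by_cases hi : i ∈ S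
  · lift i to S using hi
    have hgi : g i = lam * v i := congrFun hstat i
    rw [Pi.smul_apply, smul_eq_mul, hgi, inv_mul_cancel_left₀ hlam.ne',
      Subtype.val_injective.extend_apply]
    exact hv i
  · rw [Function.extend_val_apply' hi, Pi.zero_apply]
    simpa using (hdual i hi).le

end Lasso

/-- Primal-dual witness / strict dual feasibility for the Lasso. With
`y = X_S γ*_S + Xε` (`γ*` supported on `S`) and `XᵀX` invertible, if for every
`v̂_S ∈ [−1,1]^S` and every `i ∈ Sᶜ`
`|λ (X_{Sᶜ}ᵀ X_S (X_Sᵀ X_S)⁻¹ v̂_S)_i + (X_{Sᶜ}ᵀ (I − Π_S)(Xε))_i| < λ`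
where `Π_S = X_S (X_Sᵀ X_S)⁻¹ X_Sᵀ`, then any minimizer `γ̂` of the Lasso objective
`(1/2)‖y − Xγ‖² + λ‖γ‖₁` vanishes outside `S`, i.e. `supp(γ̂) ⊆ S`. -/
theorem lasso_support_subset (m p : ℕ) (X : Matrix (Fin m) (Fin p) ℝ)
    (S : Finset (Fin p)) (γstar ε : Fin p → ℝ) (lam : ℝ) (hlam : 0 < lam)
    (hsupp : ∀ i ∉ S, γstar i = 0)
    (hinv : IsUnit (Xᵀ * X).det)
    (y : Fin m → ℝ) (hy : y = X.mulVec γstar + X.mulVec ε)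
    (XS : Matrix (Fin m) {j // j ∈ S} ℝ) (hXS : XS = Matrix.of fun i j => X i j.1)
    (hcond : ∀ v : {j // j ∈ S} → ℝ, (∀ j, |v j| ≤ 1) → ∀ i ∉ S,
      |lam * ((fun k => X k i) ⬝ᵥ XS.mulVec (((XSᵀ * XS)⁻¹).mulVec v)) +
          (fun k => X k i) ⬝ᵥ ((1 - XS * (XSᵀ * XS)⁻¹ * XSᵀ).mulVec (X.mulVec ε))| < lam)
    (γhat : Fin p → ℝ)
    (hmin : ∀ γ : Fin p → ℝ,
      (1 / 2) * (∑ k, (y k - X.mulVec γhat k) ^ 2) + lam * ∑ i, |γhat i| ≤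
      (1 / 2) * (∑ k, (y k - X.mulVec γ k) ^ 2) + lam * ∑ i, |γ i|) :
    ∀ i ∉ S, γhat i = 0 := by
  obtain rfl : XS = X.submatrix id (↑) := hXS
  set XS := X.submatrix id ((↑) : S → Fin p)
  have hdet : IsUnit (XSᵀ * XS).det := (isUnit_det_transpose_mul_self_iff XS).2 <|
    injective_submatrix_val_mulVec ((isUnit_det_transpose_mul_self_iff X).1 hinv)
  obtain ⟨β, hβ⟩ := Lasso.exists_forall_objective_le XS y lam hlam
  obtain ⟨v, hkkt⟩ := Lasso.exists_isKKT_of_forall_objective_le hlam hβ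
  have hres : y - XS *ᵥ β = lam • XS *ᵥ ((XSᵀ * XS)⁻¹ *ᵥ v)
      + (1 - XS * (XSᵀ * XS)⁻¹ * XSᵀ) *ᵥ (X *ᵥ ε) := by
    have hy' : y - XS *ᵥ β = XS *ᵥ ((fun j : S => γstar j) - β) + X *ᵥ ε := by
      rw [hy, mulVec_sub, X.submatrix_val_mulVec_of_forall_notMem hsupp]
      abel
    rw [hy', mulVec_add_eq_of_isUnit_det_transpose_mul_self hdet, ← hy', hkkt.1, mulVec_smul,
      mulVec_smul]
  obtain ⟨V, hV, hVoff⟩ := hkkt.exists_extend_val hlam fun i hi => by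
    change |(fun k => X k i) ⬝ᵥ (y - XS *ᵥ β)| < lam
    rw [hres, dotProduct_add, dotProduct_smul, smul_eq_mul]
    exact hcond v (fun j => (hkkt.2 j).1) i hi
  exact fun i hi => hV.eq_zero_of_objective_le hlam (hmin _) (hVoff i hi)
end
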